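/- arXiv:1610.02620 — 6 statements merged into one kernel-verified Lean document; each statement's English description precedes it below -/
import Mathlib

section
/- Let x₁ ∈ ℂ^{L₁}, x₂ ∈ ℂ^{L₂} with x₁[0], x₂[0] ≠ 0, and suppose the polynomials z^{L₁−1}X₁(z) and z^{L₂−1}X₂(z) (which are ordinary polynomials of degrees L₁−1 and L₂−1) are coprime. Then the stacked vector x = (x₁; x₂) lies in the null space of the Sylvester matrix S = S(z^{L₁}X₁(z), z^{L₂}X₂(z)), and rank(S) = L₁ + L₂ − 1; consequently W = S*S is positive semidefinite, satisfies Wx = 0, and has rank L₁ + L₂ − 1. -/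
/-! The equation `S(P₁, P₂) v = 0` for `v = (a; b)` says exactly that `A · P₂ = B · P₁`, where
`A`, `B` are the polynomials of the two halves of `v` (of degrees `< L₁`, `< L₂`). With
`Pᵢ = z Qᵢ` and `Q₁, Q₂` coprime, `Q₁` divides `A`; since `deg A ≤ deg Q₁ = L₁ - 1`, this forces
`A = c Q₁` and `B = c Q₂`, so the kernel of `S` is the line through `x = (x₁; x₂)`. Rank–nullity
gives `rank S = L₁ + L₂ - 1`, and `S*S` has the same kernel and rank. -/

open ComplexOrder Matrix

/-- The `(d₁+d₂) × (d₁+d₂)` Sylvester matrix of `P₁, P₂`: the first `d₁` columns are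
successive shifts of the coefficient vector of `P₂` (leading coefficient on top), and the
remaining `d₂` columns are successive shifts of the negated coefficient vector of `P₁`. -/
noncomputable def sylvester (d₁ d₂ : ℕ) (P₁ P₂ : Polynomial ℂ) :
    Matrix (Fin (d₁ + d₂)) (Fin (d₁ + d₂)) ℂ :=
  fun i j =>
    if (j : ℕ) < d₁ then
      (if (j : ℕ) ≤ (i : ℕ) ∧ (i : ℕ) ≤ (j : ℕ) + d₂ then
        P₂.coeff (d₂ - ((i : ℕ) - (j : ℕ))) else 0)
    else
      (if (j : ℕ) - d₁ ≤ (i : ℕ) ∧ (i : ℕ) ≤ ((j : ℕ) - d₁) + d₁ then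
        -P₁.coeff (d₁ - ((i : ℕ) - ((j : ℕ) - d₁))) else 0)

open Polynomial hiding sylvester

/-- The polynomial `z^{m-1} Y(z) = ∑ₙ y[n] z^{m-1-n}` of a signal `y` of length `m`. -/
noncomputable def signalPoly {R : Type*} [Semiring R] (m : ℕ) (y : Fin m → R) : R[X] :=
  ∑ n : Fin m, C (y n) * X ^ (m - 1 - (n : ℕ))

section signalPoly

variable {R : Type*} [Semiring R] {m : ℕ}

lemma natDegree_signalPoly_le (y : Fin m → R) : (signalPoly m y).natDegree ≤ m - 1 :=
  natDegree_sum_le_of_forall_le _ _ fun _ _ =>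
    (natDegree_C_mul_X_pow_le _ _).trans (Nat.sub_le _ _)

lemma X_mul_signalPoly (y : Fin m → R) :
    X * signalPoly m y = ∑ n : Fin m, C (y n) * X ^ (m - (n : ℕ)) := by
  rw [signalPoly, Finset.mul_sum]
  refine Finset.sum_congr rfl fun n _ => ?_
  rw [show m - (n : ℕ) = m - 1 - n + 1 by omega, pow_succ', ← mul_assoc, X_mul, mul_assoc]

lemma natDegree_X_mul_signalPoly_le (y : Fin m → R) : (X * signalPoly m y).natDegree ≤ m := by
  rw [X_mul_signalPoly]
  exact natDegree_sum_le_of_forall_le _ _ fun _ _ =>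
    (natDegree_C_mul_X_pow_le _ _).trans (Nat.sub_le _ _)

lemma coeff_signalPoly (y : Fin m → R) (k : Fin m) :
    (signalPoly m y).coeff (m - 1 - k) = y k := by
  rw [signalPoly, finsetSum_coeff, Finset.sum_eq_single k]
  · simp
  · intro n _ hnk
    rw [coeff_C_mul_X_pow, if_neg]
    exact fun h => hnk (Fin.ext (by omega))
  · simp

lemma signalPoly_injective : Function.Injective (signalPoly (R := R) m) := fun y y' h =>
  funext fun k => by rw [← coeff_signalPoly y k, h, coeff_signalPoly]

lemma signalPoly_smul (c : R) (y : Fin m → R) : signalPoly m (c • y) = C c * signalPoly m y := by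
  simp only [signalPoly, Finset.mul_sum, Pi.smul_apply, smul_eq_mul, C_mul, mul_assoc]

lemma natDegree_signalPoly (hm : 0 < m) {y : Fin m → R} (hy : y ⟨0, hm⟩ ≠ 0) :
    (signalPoly m y).natDegree = m - 1 :=
  (natDegree_signalPoly_le y).antisymm
    (le_natDegree_of_ne_zero (by simpa using (coeff_signalPoly y ⟨0, hm⟩).trans_ne hy))

lemma coeff_signalPoly_mul (y : Fin m → R) (P : R[X]) (k : ℕ) :
    (signalPoly m y * P).coeff k =
      ∑ j : Fin m, if m - 1 - (j : ℕ) ≤ k then y j * P.coeff (k - (m - 1 - j)) else 0 := by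
  simp only [signalPoly, Finset.sum_mul, finsetSum_coeff, mul_assoc, coeff_C_mul,
    coeff_X_pow_mul', mul_ite, mul_zero]

lemma coeff_signalPoly_mul_eq_zero (y : Fin m → R) {P : R[X]} {d k : ℕ}
    (hP : P.natDegree ≤ d) (hk : m + d ≤ k) : (signalPoly m y * P).coeff k = 0 := by
  rw [coeff_signalPoly_mul]
  refine Finset.sum_eq_zero fun j _ => ?_
  rw [coeff_eq_zero_of_natDegree_lt (by omega), mul_zero, ite_self]

end signalPoly

lemma exists_eq_C_mul_of_mul_eq_mul {R : Type*} [CommRing R] [IsDomain R] {Q₁ Q₂ A B : R[X]}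
    (hcop : IsCoprime Q₁ Q₂) (hQ₁ : Q₁ ≠ 0) (hA : A.natDegree ≤ Q₁.natDegree)
    (h : A * Q₂ = B * Q₁) : ∃ c, A = C c * Q₁ ∧ B = C c * Q₂ := by
  obtain ⟨D, rfl⟩ := hcop.dvd_of_dvd_mul_right ⟨B, by rw [h, mul_comm]⟩
  have hD : D.natDegree = 0 := by
    rcases eq_or_ne D 0 with rfl | hD
    · simp
    · rw [natDegree_mul hQ₁ hD] at hA
      omega
  set c := D.coeff 0
  have hDc : D = C c := eq_C_of_natDegree_eq_zero hD
  refine ⟨c, by rw [hDc, mul_comm], mul_right_cancel₀ hQ₁ ?_⟩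
  rw [← h, hDc]
  ring

lemma Matrix.rank_eq_card_sub_one_of_ker_eq_span {K m n : Type*} [Field K] [Fintype n]
    (M : Matrix m n K) {x : n → K} (hx : x ≠ 0) (hker : LinearMap.ker M.mulVecLin = K ∙ x) :
    M.rank = Fintype.card n - 1 := by
  have h := LinearMap.finrank_range_add_finrank_ker M.mulVecLin
  rw [hker, finrank_span_singleton hx, Module.finrank_fintype_fun_eq_card] at h
  rw [Matrix.rank]
  omega

section sylvester

variable {d₁ d₂ : ℕ} {P₁ P₂ : ℂ[X]}

/-- A band entry of the Sylvester matrix, reindexed as a coefficient of a product with a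
signal polynomial. -/
private lemma sylvester_band_eq {P : ℂ[X]} {d e n i j : ℕ} (hP : P.natDegree ≤ e)
    (hn : n = d + e) (hi : i < n) (hj : j < d) :
    (if j ≤ i ∧ i ≤ j + e then P.coeff (e - (i - j)) else 0) =
      if d - 1 - j ≤ n - 1 - i then P.coeff (n - 1 - i - (d - 1 - j)) else 0 := by
  split_ifs with h₁ h₂ h₂
  · congr 1
    omega
  · omega
  · exact (coeff_eq_zero_of_natDegree_lt (by omega)).symm
  · rfl

lemma sylvester_mulVec_apply (hP₁ : P₁.natDegree ≤ d₁) (hP₂ : P₂.natDegree ≤ d₂)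
    (v : Fin (d₁ + d₂) → ℂ) (i : Fin (d₁ + d₂)) :
    (sylvester d₁ d₂ P₁ P₂ *ᵥ v) i =
      (signalPoly d₁ (fun j => v (Fin.castAdd d₂ j)) * P₂ -
        signalPoly d₂ (fun j => v (Fin.natAdd d₁ j)) * P₁).coeff (d₁ + d₂ - 1 - i) := by
  rw [mulVec, dotProduct, Fin.sum_univ_add, coeff_sub, coeff_signalPoly_mul, coeff_signalPoly_mul,
    sub_eq_add_neg, ← Finset.sum_neg_distrib]
  congr 1 <;> refine Finset.sum_congr rfl fun j _ => ?_
  · simp only [sylvester, Fin.val_castAdd, if_pos j.2]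
    rw [sylvester_band_eq hP₂ rfl i.2 j.2, ite_mul, zero_mul, mul_comm]
  · simp only [sylvester, Fin.val_natAdd, if_neg (Nat.not_lt.2 (Nat.le_add_right d₁ j)),
      Nat.add_sub_cancel_left]
    rw [← neg_zero (G := ℂ), ← neg_ite, neg_zero, neg_mul,
      sylvester_band_eq hP₁ (add_comm d₁ d₂) i.2 j.2, ite_mul, zero_mul, mul_comm]

lemma sylvester_mulVec_eq_zero_iff (hP₁ : P₁.natDegree ≤ d₁) (hP₂ : P₂.natDegree ≤ d₂)
    (v : Fin (d₁ + d₂) → ℂ) :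
    sylvester d₁ d₂ P₁ P₂ *ᵥ v = 0 ↔
      signalPoly d₁ (fun j => v (Fin.castAdd d₂ j)) * P₂ =
        signalPoly d₂ (fun j => v (Fin.natAdd d₁ j)) * P₁ := by
  constructor
  · intro h
    refine sub_eq_zero.1 (Polynomial.ext fun k => ?_)
    rw [coeff_zero]
    by_cases hk : k < d₁ + d₂
    · have hi := congrFun h ⟨d₁ + d₂ - 1 - k, by omega⟩
      rwa [sylvester_mulVec_apply hP₁ hP₂, show d₁ + d₂ - 1 - (d₁ + d₂ - 1 - k) = k by omega] at hi
    · rw [coeff_sub, coeff_signalPoly_mul_eq_zero _ hP₂ (by omega),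
        coeff_signalPoly_mul_eq_zero _ hP₁ (by omega), sub_zero]
  · intro h
    funext i
    rw [sylvester_mulVec_apply hP₁ hP₂, sub_eq_zero.2 h, coeff_zero, Pi.zero_apply]

end sylvester

lemma ker_sylvester_X_mul_signalPoly {L₁ L₂ : ℕ} (hL₁ : 0 < L₁)
    {x₁ : Fin L₁ → ℂ} (x₂ : Fin L₂ → ℂ) (hx₁ : x₁ ⟨0, hL₁⟩ ≠ 0)
    (hcop : IsCoprime (signalPoly L₁ x₁) (signalPoly L₂ x₂)) :
    LinearMap.ker (sylvester L₁ L₂ (X * signalPoly L₁ x₁) (X * signalPoly L₂ x₂)).mulVecLin =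
      ℂ ∙ Fin.append x₁ x₂ := by
  ext v
  rw [LinearMap.mem_ker, mulVecLin_apply, Submodule.mem_span_singleton,
    sylvester_mulVec_eq_zero_iff (natDegree_X_mul_signalPoly_le _) (natDegree_X_mul_signalPoly_le _),
    mul_left_comm, mul_left_comm _ X, mul_right_inj' X_ne_zero]
  constructor
  · intro h
    have hQ₁ : signalPoly L₁ x₁ ≠ 0 := fun h₀ => hx₁ <| by
      simpa [h₀] using (coeff_signalPoly x₁ ⟨0, hL₁⟩).symm
    obtain ⟨c, hA, hB⟩ := exists_eq_C_mul_of_mul_eq_mul hcop hQ₁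
      ((natDegree_signalPoly_le _).trans (natDegree_signalPoly hL₁ hx₁).ge) h
    rw [← signalPoly_smul] at hA hB
    refine ⟨c, ?_⟩
    rw [← Fin.append_castAdd_natAdd (f := v), signalPoly_injective hA, signalPoly_injective hB]
    ext i
    refine Fin.addCases (fun j => ?_) (fun j => ?_) i <;> simp
  · rintro ⟨c, rfl⟩
    simp only [Pi.smul_apply, Fin.append_left, Fin.append_right, ← Pi.smul_def, signalPoly_smul]
    ring

theorem dual_certificate_properties_general (L₁ L₂ : ℕ) (hL₁ : 0 < L₁)
    (x₁ : Fin L₁ → ℂ) (x₂ : Fin L₂ → ℂ)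
    (hx₁ : x₁ ⟨0, hL₁⟩ ≠ 0)
    (hcop : IsCoprime
      (∑ n : Fin L₁, Polynomial.C (x₁ n) * Polynomial.X ^ (L₁ - 1 - (n : ℕ)))
      (∑ n : Fin L₂, Polynomial.C (x₂ n) * Polynomial.X ^ (L₂ - 1 - (n : ℕ)))) :
    letI P₁ : Polynomial ℂ := ∑ n : Fin L₁, Polynomial.C (x₁ n) * Polynomial.X ^ (L₁ - (n : ℕ))
    letI P₂ : Polynomial ℂ := ∑ n : Fin L₂, Polynomial.C (x₂ n) * Polynomial.X ^ (L₂ - (n : ℕ))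
    letI S := sylvester L₁ L₂ P₁ P₂
    S.mulVec (Fin.append x₁ x₂) = 0 ∧
    S.rank = L₁ + L₂ - 1 ∧
    (Sᴴ * S).PosSemidef ∧
    (Sᴴ * S).mulVec (Fin.append x₁ x₂) = 0 ∧
    (Sᴴ * S).rank = L₁ + L₂ - 1 := by
  simp only [← X_mul_signalPoly]
  have hker := ker_sylvester_X_mul_signalPoly hL₁ x₂ hx₁ hcop
  have hx : Fin.append x₁ x₂ ≠ 0 := fun h =>
    hx₁ ((Fin.append_left x₁ x₂ _).symm.trans (congrFun h (Fin.castAdd L₂ ⟨0, hL₁⟩)))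
  have hSx := LinearMap.mem_ker.1 (hker ▸ Submodule.mem_span_singleton_self (Fin.append x₁ x₂))
  rw [mulVecLin_apply] at hSx
  have hrank := Matrix.rank_eq_card_sub_one_of_ker_eq_span _ hx hker
  rw [Fintype.card_fin] at hrank
  exact ⟨hSx, hrank, posSemidef_conjTranspose_mul_self _,
    by rw [← mulVec_mulVec, hSx, mulVec_zero], by rw [rank_conjTranspose_mul_self, hrank]⟩

/-- For signals `x₁, x₂` with nonzero leading entries whose polynomials
`z^{L₁-1}X₁(z)` and `z^{L₂-1}X₂(z)` are coprime, the stacked vector `(x₁; x₂)` lies in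
the null space of the Sylvester matrix `S = S(z^{L₁}X₁(z), z^{L₂}X₂(z))`,
`rank S = L₁+L₂−1`; consequently `W = S*S` is positive semidefinite, `W x = 0`, and
`rank W = L₁+L₂−1`. -/
theorem dual_certificate_properties (L₁ L₂ : ℕ) (hL₁ : 0 < L₁) (hL₂ : 0 < L₂)
    (x₁ : Fin L₁ → ℂ) (x₂ : Fin L₂ → ℂ)
    (hx₁ : x₁ ⟨0, hL₁⟩ ≠ 0) (hx₂ : x₂ ⟨0, hL₂⟩ ≠ 0)
    (hcop : IsCoprime
      (∑ n : Fin L₁, Polynomial.C (x₁ n) * Polynomial.X ^ (L₁ - 1 - (n : ℕ)))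
      (∑ n : Fin L₂, Polynomial.C (x₂ n) * Polynomial.X ^ (L₂ - 1 - (n : ℕ)))) :
    letI P₁ : Polynomial ℂ := ∑ n : Fin L₁, Polynomial.C (x₁ n) * Polynomial.X ^ (L₁ - (n : ℕ))
    letI P₂ : Polynomial ℂ := ∑ n : Fin L₂, Polynomial.C (x₂ n) * Polynomial.X ^ (L₂ - (n : ℕ))
    letI S := sylvester L₁ L₂ P₁ P₂
    S.mulVec (Fin.append x₁ x₂) = 0 ∧
    S.rank = L₁ + L₂ - 1 ∧
    (Sᴴ * S).PosSemidef ∧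
    (Sᴴ * S).mulVec (Fin.append x₁ x₂) = 0 ∧
    (Sᴴ * S).rank = L₁ + L₂ - 1 :=
  dual_certificate_properties_general L₁ L₂ hL₁ x₁ x₂ hx₁ hcop
end

section
/- For x ∈ ℂ^N nonzero, let T_x = { x h* + h x* : h ∈ ℂ^N } ⊆ Hermitian N×N matrices. If W is a positive semidefinite Hermitian matrix with W x = 0 and rank(W) = N−1, and H is a Hermitian matrix with H in the orthogonal complement of T_x (i.e., H x = 0) and trace(W H) = 0 and H ⪰ 0 on x^⊥ (i.e., v* H v ≥ 0 for all v ⊥ x), then H = 0. -/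
open Matrix ComplexOrder

lemma aux_trace_eq_zero {m n : Type*} [Fintype m] [Fintype n]
    (A : Matrix m n ℂ) (h : (Aᴴ * A).trace = 0) : A = 0 := by
  have h1 : ∑ j, ∑ i, ((Complex.normSq (A i j) : ℝ) : ℂ) = 0 := by
    rw [← h]
    simp only [trace, diag, mul_apply, conjTranspose_apply]
    refine Finset.sum_congr rfl fun j _ => Finset.sum_congr rfl fun i _ => ?_
    rw [Complex.normSq_eq_conj_mul_self]
    rfl
  have h2 : ∑ j, ∑ i, Complex.normSq (A i j) = 0 := by exact_mod_cast h1
  ext i j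
  have h3 := (Finset.sum_eq_zero_iff_of_nonneg (fun j _ =>
    Finset.sum_nonneg fun i _ => Complex.normSq_nonneg _)).mp h2 j (Finset.mem_univ j)
  have h4 := (Finset.sum_eq_zero_iff_of_nonneg (fun i _ =>
    Complex.normSq_nonneg _)).mp h3 i (Finset.mem_univ i)
  simpa using Complex.normSq_eq_zero.mp h4

/-- If `W ⪰ 0` with `Wx = 0` and `rank W = N−1`, and the Hermitian matrix `H` satisfies
`Hx = 0`, `trace (WH) = 0`, and `v* H v ≥ 0` for all `v ⊥ x`, then `H = 0`. -/
theorem dual_certificate_implies_uniqueness (N : ℕ) (x : Fin N → ℂ) (hx : x ≠ 0)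
    (W H : Matrix (Fin N) (Fin N) ℂ)
    (hW : W.PosSemidef) (hWx : W.mulVec x = 0) (hWrank : W.rank = N - 1)
    (hH : H.IsHermitian) (hHx : H.mulVec x = 0)
    (htrace : (W * H).trace = 0)
    (hpos : ∀ v : Fin N → ℂ, star v ⬝ᵥ x = 0 → 0 ≤ star v ⬝ᵥ H.mulVec v) :
    H = 0 := by
  classical
  have hN : 0 < N := by
    cases N with
    | zero => exact absurd (funext fun i => i.elim0) hx
    | succ n => exact Nat.succ_pos n
  -- x* x ≠ 0
  have hxx : star x ⬝ᵥ x ≠ 0 := by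
    rw [Ne, dotProduct_star_self_eq_zero]
    exact hx
  -- x* H = 0
  have hxH : (star x) ᵥ* H = 0 := by
    have : (star x) ᵥ* Hᴴ = star (H *ᵥ x) := (star_mulVec H x).symm
    rw [hH.eq] at this
    rw [this, hHx, star_zero]
  have hxHv : ∀ w : Fin N → ℂ, star x ⬝ᵥ (H *ᵥ w) = 0 := by
    intro w
    rw [dotProduct_mulVec, hxH, zero_dotProduct]
  -- H is PSD
  have hHpsd : H.PosSemidef := by
    refine .of_dotProduct_mulVec_nonneg hH fun v => ?_
    set c : ℂ := (star x ⬝ᵥ v) / (star x ⬝ᵥ x) with hc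
    set w : Fin N → ℂ := v - c • x with hwdef
    have hsxx : star (star x ⬝ᵥ x) = star x ⬝ᵥ x := by
      simp [dotProduct, star_sum, mul_comm]
    have hw : star w ⬝ᵥ x = 0 := by
      have hsv : star v ⬝ᵥ x = star c * (star x ⬝ᵥ x) := by
        have h1 : star v ⬝ᵥ x = star (star x ⬝ᵥ v) := by
          simp [dotProduct, star_sum, mul_comm]
        rw [h1, hc, star_div₀, hsxx, div_mul_cancel₀ _ hxx]
      rw [hwdef]
      simp only [star_sub, star_smul, sub_dotProduct, smul_dotProduct, smul_eq_mul]
      rw [hsv]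
      ring
    have h1 := hpos w hw
    have hv : H *ᵥ v = H *ᵥ w := by
      rw [hwdef, mulVec_sub, mulVec_smul, hHx, smul_zero, sub_zero]
    have h2 : star v ⬝ᵥ (H *ᵥ v) = star w ⬝ᵥ (H *ᵥ w) := by
      rw [hv]
      have : v = w + c • x := by rw [hwdef]; abel
      rw [this]
      simp only [star_add, star_smul, add_dotProduct, smul_dotProduct, smul_eq_mul]
      rw [hxHv w, mul_zero, add_zero]
    rw [h2]
    exact h1
  -- H * W = 0 via square roots
  open scoped MatrixOrder in
  have hHW : H * W = 0 := by
    set SW := CFC.sqrt W with hSWdef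
    set SH := CFC.sqrt H with hSHdef
    have hSW := (CFC.sqrt_nonneg W).posSemidef
    have hSH := (CFC.sqrt_nonneg H).posSemidef
    have hA : (SH * SW)ᴴ * (SH * SW) = SW * H * SW := by
      rw [conjTranspose_mul, hSW.1.eq, hSH.1.eq]
      simp only [mul_assoc]
      rw [← mul_assoc SH SH SW, CFC.sqrt_mul_sqrt_self H hHpsd.nonneg]
    have htr : ((SH * SW)ᴴ * (SH * SW)).trace = 0 := by
      rw [hA, trace_mul_cycle]
      have : SW * (SW * H) = W * H := by
        rw [← mul_assoc, CFC.sqrt_mul_sqrt_self W hW.nonneg]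
      rw [mul_assoc, this, htrace]
    have hz : SH * SW = 0 := aux_trace_eq_zero _ htr
    calc H * W = SH * SH * (SW * SW) := by rw [CFC.sqrt_mul_sqrt_self H hHpsd.nonneg, CFC.sqrt_mul_sqrt_self W hW.nonneg]
      _ = SH * (SH * SW) * SW := by simp only [mul_assoc]
      _ = 0 := by rw [hz, mul_zero, zero_mul]
  -- kernel of W is span of x
  have hrange : Module.finrank ℂ (LinearMap.range W.mulVecLin) = N - 1 := hWrank
  have hrk := LinearMap.finrank_range_add_finrank_ker W.mulVecLin
  rw [Module.finrank_fin_fun, hrange] at hrk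
  have hker : Module.finrank ℂ (LinearMap.ker W.mulVecLin) = 1 := by omega
  have hxker : x ∈ LinearMap.ker W.mulVecLin := by
    simp [LinearMap.mem_ker, mulVecLin_apply, hWx]
  have hspan : Submodule.span ℂ {x} = LinearMap.ker W.mulVecLin := by
    apply Submodule.eq_of_le_of_finrank_le
    · rwa [Submodule.span_singleton_le_iff_mem]
    · rw [hker, finrank_span_singleton hx]
  -- range ⊓ ker = ⊥
  have hinf : LinearMap.range W.mulVecLin ⊓ LinearMap.ker W.mulVecLin = ⊥ := by
    rw [eq_bot_iff]
    rintro v hv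
    rw [Submodule.mem_inf] at hv
    obtain ⟨⟨u, rfl⟩, hv⟩ := hv
    rw [LinearMap.mem_ker] at hv
    have : star (W.mulVecLin u) ⬝ᵥ (W.mulVecLin u) = 0 := by
      simp only [mulVecLin_apply] at hv ⊢
      rw [star_mulVec, hW.1.eq, ← dotProduct_mulVec, hv, dotProduct_zero]
    rw [dotProduct_star_self_eq_zero] at this
    simp [this]
  have hsup : LinearMap.range W.mulVecLin ⊔ LinearMap.ker W.mulVecLin = ⊤ := by
    apply Submodule.eq_top_of_finrank_eq
    rw [Module.finrank_fin_fun]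
    have h := Submodule.finrank_sup_add_finrank_inf_eq
      (LinearMap.range W.mulVecLin) (LinearMap.ker W.mulVecLin)
    rw [hinf, finrank_bot, hrange, hker] at h
    omega
  -- conclude
  have key : ∀ v, H *ᵥ v = 0 := by
    intro v
    have hv : v ∈ LinearMap.range W.mulVecLin ⊔ LinearMap.ker W.mulVecLin := by
      rw [hsup]; trivial
    obtain ⟨r, hr, k, hk, rfl⟩ := Submodule.mem_sup.mp hv
    obtain ⟨u, rfl⟩ := hr
    rw [← hspan] at hk
    obtain ⟨a, rfl⟩ := Submodule.mem_span_singleton.mp hk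
    simp only [mulVecLin_apply, mulVec_add, mulVec_smul, mulVec_mulVec, hHW, hHx,
      smul_zero, zero_mulVec, add_zero]
  ext i j
  have := congrFun (key (Pi.single j 1)) i
  simpa [mulVec, dotProduct, Pi.single_apply] using this
end

section
/- If W and K are positive semidefinite Hermitian matrices with trace(W K) = 0, W x = 0, rank(W) = N−1, and K x = 0, then K = 0. -/
open Matrix ComplexOrder

lemma trace_ctms_eq_zero {m n : Type*} [Fintype m] [Fintype n]
    {A : Matrix m n ℂ} (h : (Aᴴ * A).trace = 0) : A = 0 := by
  have h1 : ((∑ j, ∑ i, Complex.normSq (A i j) : ℝ) : ℂ) = 0 := by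
    rw [Matrix.trace] at h
    rw [← h]
    push_cast
    simp [Matrix.mul_apply, Matrix.conjTranspose_apply, Matrix.diag, Complex.normSq_eq_conj_mul_self]
  have h2 : (∑ j, ∑ i, Complex.normSq (A i j) : ℝ) = 0 := by exact_mod_cast h1
  have h3 : ∀ j, ∀ i, Complex.normSq (A i j) = 0 := by
    intro j i
    have := (Finset.sum_eq_zero_iff_of_nonneg (fun j _ => Finset.sum_nonneg
      (fun i _ => Complex.normSq_nonneg (A i j)))).mp h2 j (Finset.mem_univ j)
    exact (Finset.sum_eq_zero_iff_of_nonneg (fun i _ => Complex.normSq_nonneg _)).mp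
      this i (Finset.mem_univ i)
  ext i j
  simpa using Complex.normSq_eq_zero.mp (h3 j i)

/-- If `W, K ⪰ 0` with `trace (WK) = 0`, `Wx = 0`, `rank W = N−1`, and `Kx = 0`
(for a nonzero `x`), then `K = 0`. -/
theorem psd_trace_zero_rank (N : ℕ) (x : Fin N → ℂ) (hx : x ≠ 0)
    (W K : Matrix (Fin N) (Fin N) ℂ)
    (hW : W.PosSemidef) (hK : K.PosSemidef)
    (htrace : (W * K).trace = 0)
    (hWx : W.mulVec x = 0) (hWrank : W.rank = N - 1)
    (hKx : K.mulVec x = 0) :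
    K = 0 := by
  -- W * K = 0
  open scoped MatrixOrder in set sW := CFC.sqrt W
  open scoped MatrixOrder in set sK := CFC.sqrt K
  open scoped MatrixOrder in have hsW : sW * sW = W := CFC.sqrt_mul_sqrt_self W hW.nonneg
  open scoped MatrixOrder in have hsK : sK * sK = K := CFC.sqrt_mul_sqrt_self K hK.nonneg
  have hA : (sW * sK)ᴴ * (sW * sK) = sK * W * sK := by
    open scoped MatrixOrder in rw [Matrix.conjTranspose_mul, (show sW.PosSemidef from (CFC.sqrt_nonneg W).posSemidef).isHermitian.eq,
      (show sK.PosSemidef from (CFC.sqrt_nonneg K).posSemidef).isHermitian.eq]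
    rw [show sK * sW * (sW * sK) = sK * (sW * sW) * sK by noncomm_ring, hsW]
  have htr : ((sW * sK)ᴴ * (sW * sK)).trace = 0 := by
    rw [hA]
    calc (sK * W * sK).trace = (W * (sK * sK)).trace := by
          rw [Matrix.mul_assoc, Matrix.trace_mul_comm, Matrix.mul_assoc]
      _ = 0 := by rw [hsK, htrace]
  have hAz : sW * sK = 0 := trace_ctms_eq_zero htr
  have hWK : W * K = 0 := by
    have h0 : (sW * (sW * sK)) * sK = 0 := by rw [hAz]; simp
    rw [← hsW, ← hsK]
    calc sW * sW * (sK * sK) = sW * (sW * sK) * sK := by noncomm_ring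
      _ = 0 := h0
  -- ker W = span {x}
  have hker : LinearMap.ker W.mulVecLin = Submodule.span ℂ {x} := by
    have hxmem : x ∈ LinearMap.ker W.mulVecLin := by simpa using hWx
    have hN : 1 ≤ N := by
      rcases Nat.eq_zero_or_pos N with h0 | h; · exfalso; apply hx; ext i; exact absurd i.2 (by omega)
      · exact h
    have hdim : Module.finrank ℂ (LinearMap.ker W.mulVecLin) = 1 := by
      have := LinearMap.finrank_range_add_finrank_ker W.mulVecLin
      rw [Module.finrank_fintype_fun_eq_card, Fintype.card_fin] at this
      have hr : Module.finrank ℂ (LinearMap.range W.mulVecLin) = N - 1 := by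
        rw [← hWrank]; rfl
      omega
    have hle : Submodule.span ℂ {x} ≤ LinearMap.ker W.mulVecLin :=
      Submodule.span_le.mpr (by simpa using hxmem)
    have hspan : Module.finrank ℂ (Submodule.span ℂ ({x} : Set (Fin N → ℂ))) = 1 :=
      finrank_span_singleton hx
    exact (Submodule.eq_of_le_of_finrank_eq hle (by rw [hdim, hspan])).symm
  -- K columns in span {x}, and Kᴴ x = 0 kills them
  have hcol : ∀ v : Fin N → ℂ, K.mulVec v = 0 := by
    intro v
    have hmem : K.mulVec v ∈ Submodule.span ℂ ({x} : Set (Fin N → ℂ)) := by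
      rw [← hker]
      simp only [LinearMap.mem_ker, mulVecLin_apply]
      rw [Matrix.mulVec_mulVec, hWK]
      simp
    obtain ⟨c, hc⟩ := Submodule.mem_span_singleton.mp hmem
    have hdot : star x ⬝ᵥ K.mulVec v = 0 := by
      rw [Matrix.dotProduct_mulVec]
      have : star x ᵥ* K = 0 := by
        have : star (K.mulVec x) = star x ᵥ* Kᴴ := Matrix.star_mulVec K x
        rw [hKx, hK.isHermitian.eq] at this
        simpa using this.symm
      rw [this]; simp
    rw [← hc] at hdot
    have hxx : star x ⬝ᵥ x ≠ 0 := by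
      intro h0
      apply hx
      simpa [dotProduct_comm] using h0
    have : c = 0 := by
      have : c * (star x ⬝ᵥ x) = 0 := by
        simpa [dotProduct_smul, smul_eq_mul] using hdot
      exact (mul_eq_zero.mp this).resolve_right hxx
    rw [← hc, this, zero_smul]
  ext i j
  have := congrFun (hcol (Pi.single j 1)) i
  simpa [Matrix.mulVec_single] using this
end

section
/- Let x ∈ ℂ^N and H = x h* + h x* for some h ∈ ℂ^N, with x ≠ 0. If H = 0 then h = i c x for some real constant c. -/
/-!
Column `j` of `x h* + h x* = 0`, for any `j` with `x j ≠ 0`, shows that `h = a x` for a scalar `a`.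
Then `x h* + h x* = (ā + a) x x*`, and `x x* ≠ 0`, so `ā + a = 0`: `a` is purely imaginary.
-/

open Matrix

section

variable {ι K : Type*}

theorem exists_eq_smul_of_vecMulVec_star_add_eq_zero [Field K] [StarRing K] {x h : ι → K}
    (hx : x ≠ 0) (hH : vecMulVec x (star h) + vecMulVec h (star x) = 0) :
    ∃ a : K, h = a • x := by
  obtain ⟨j, hj⟩ := Function.ne_iff.mp hx
  have hj_star : star (x j) ≠ 0 := star_ne_zero.mpr hj
  refine ⟨-(star (h j) / star (x j)), funext fun i => ?_⟩
  have hij : x i * star (h j) + h i * star (x j) = 0 := by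
    simpa [vecMulVec_apply] using congr($hH i j)
  rw [Pi.smul_apply, smul_eq_mul]
  field_simp
  linear_combination hij

theorem vecMulVec_star_smul_add [CommRing K] [StarRing K] (a : K) (x : ι → K) :
    vecMulVec x (star (a • x)) + vecMulVec (a • x) (star x) =
      (star a + a) • vecMulVec x (star x) := by
  rw [star_smul, vecMulVec_smul, smul_vecMulVec, add_smul]

end

theorem Complex.eq_I_mul_im_of_star_add_self_eq_zero {z : ℂ} (hz : star z + z = 0) :
    z = I * z.im := by
  have hre : z.re = 0 := by simpa [← two_mul] using congr_arg re hz
  apply Complex.ext <;> simp [hre]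

/-- If `x ≠ 0` and `x h* + h x* = 0`, then `h = i c x` for some real `c`. -/
theorem tangent_space_kernel (N : ℕ) (x h : Fin N → ℂ) (hx : x ≠ 0)
    (hH : vecMulVec x (star h) + vecMulVec h (star x) = 0) :
    ∃ c : ℝ, h = fun i => Complex.I * (c : ℂ) * x i := by
  obtain ⟨a, rfl⟩ := exists_eq_smul_of_vecMulVec_star_add_eq_zero hx hH
  rw [vecMulVec_star_smul_add] at hH
  have hskew : star a + a = 0 :=
    (smul_eq_zero.mp hH).resolve_right (vecMulVec_ne_zero hx (star_ne_zero.mpr hx))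
  refine ⟨a.im, funext fun i => ?_⟩
  rw [Pi.smul_apply, smul_eq_mul, ← Complex.eq_I_mul_im_of_star_add_self_eq_zero hskew]
end

section
/- For a 2D complex signal x of size L₁₁ × L₁₂, the 1D autocorrelation of its column-stacked vectorization is determined by the 2D autocorrelation: for m ≥ 0, a_{1D}[m] = a_{2D}[m mod L₁₁, ⌊m/L₁₁⌋] + a_{2D}[(m mod L₁₁) − L₁₁, ⌊m/L₁₁⌋ + 1], where out-of-range entries of the 2D signal in the second coordinate are zero. -/
/-- Zero-extension of a 2D finite signal to `ℤ × ℤ`. -/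
noncomputable def ext2 (L₁₁ L₁₂ : ℕ) (x : Fin L₁₁ → Fin L₁₂ → ℂ) (i j : ℤ) : ℂ :=
  if h : 0 ≤ i ∧ i < (L₁₁ : ℤ) ∧ 0 ≤ j ∧ j < (L₁₂ : ℤ) then
    x ⟨i.toNat, by omega⟩ ⟨j.toNat, by omega⟩
  else 0

/-- Column-stacked vectorization, extended by zero to `ℤ`:
`x₁D[l₂·L₁₁ + l₁] = x[l₁, l₂]`. -/
noncomputable def vec1D (L₁₁ L₁₂ : ℕ) (x : Fin L₁₁ → Fin L₁₂ → ℂ) (n : ℤ) : ℂ :=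
  ext2 L₁₁ L₁₂ x (n % (L₁₁ : ℤ)) (n / (L₁₁ : ℤ))

/-- 1D autocorrelation of the vectorization. -/
noncomputable def autocorr1D (L₁₁ L₁₂ : ℕ) (x : Fin L₁₁ → Fin L₁₂ → ℂ) (m : ℤ) : ℂ :=
  ∑ n ∈ Finset.range (L₁₁ * L₁₂),
    vec1D L₁₁ L₁₂ x (n : ℤ) * (starRingEnd ℂ) (vec1D L₁₁ L₁₂ x ((n : ℤ) - m))

/-- 2D autocorrelation. -/
noncomputable def autocorr2D (L₁₁ L₁₂ : ℕ) (x : Fin L₁₁ → Fin L₁₂ → ℂ) (m₁ m₂ : ℤ) : ℂ :=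
  ∑ n₁ : Fin L₁₁, ∑ n₂ : Fin L₁₂,
    x n₁ n₂ * (starRingEnd ℂ) (ext2 L₁₁ L₁₂ x ((n₁ : ℤ) - m₁) ((n₂ : ℤ) - m₂))

/-! Write `m = L₁₁ q + r` with `0 ≤ r < L₁₁`. Shifting the stacked index `n₁ + L₁₁ n₂` back by `m`
lands at `(n₁ - r, n₂ - q)` if `r ≤ n₁`, and otherwise borrows one column, landing at
`(n₁ - r + L₁₁, n₂ - q - 1)`. In each case the other candidate lies outside the index rectangle,
so the shifted 1D sample is the sum of both 2D candidates, and summing against `x` splits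
`a₁D[m]` into the two 2D autocorrelation values. -/

open Finset

section Autocorrelation

variable {L₁₁ L₁₂ : ℕ} (x : Fin L₁₁ → Fin L₁₂ → ℂ)

lemma ext2_natCast (n₁ : Fin L₁₁) (n₂ : Fin L₁₂) :
    ext2 L₁₁ L₁₂ x (n₁ : ℤ) (n₂ : ℤ) = x n₁ n₂ := by
  rw [ext2, dif_pos ⟨by positivity, by exact_mod_cast n₁.2, by positivity, by exact_mod_cast n₂.2⟩]
  rfl

lemma ext2_eq_zero {i j : ℤ} (h : ¬(0 ≤ i ∧ i < L₁₁ ∧ 0 ≤ j ∧ j < L₁₂)) :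
    ext2 L₁₁ L₁₂ x i j = 0 :=
  dif_neg h

lemma vec1D_add_mul {a : ℤ} (b : ℤ) (ha₀ : 0 ≤ a) (ha : a < L₁₁) :
    vec1D L₁₁ L₁₂ x (a + L₁₁ * b) = ext2 L₁₁ L₁₂ x a b := by
  rw [vec1D, Int.add_mul_emod_self_left, Int.emod_eq_of_lt ha₀ ha,
    Int.add_mul_ediv_left _ _ (by omega), Int.ediv_eq_zero_of_lt ha₀ ha, zero_add]

lemma vec1D_add_mul_sub {a : ℤ} (b m : ℤ) (ha₀ : 0 ≤ a) (ha : a < L₁₁) :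
    vec1D L₁₁ L₁₂ x (a + L₁₁ * b - m)
      = ext2 L₁₁ L₁₂ x (a - m % L₁₁) (b - m / L₁₁)
        + ext2 L₁₁ L₁₂ x (a - (m % L₁₁ - L₁₁)) (b - (m / L₁₁ + 1)) := by
  have hm := Int.mul_ediv_add_emod m L₁₁
  have hr₀ : 0 ≤ m % L₁₁ := Int.emod_nonneg m (by omega)
  have hr : m % L₁₁ < L₁₁ := Int.emod_lt_of_pos m (by omega)
  rcases le_or_gt (m % L₁₁) a with hra | har
  · rw [show a + L₁₁ * b - m = (a - m % L₁₁) + L₁₁ * (b - m / L₁₁) by linear_combination hm,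
      vec1D_add_mul x _ (by omega) (by omega), ext2_eq_zero x (j := b - (m / L₁₁ + 1)) (by omega),
      add_zero]
  · rw [show a + L₁₁ * b - m = (a - (m % L₁₁ - L₁₁)) + L₁₁ * (b - (m / L₁₁ + 1)) by
        linear_combination hm,
      vec1D_add_mul x _ (by omega) (by omega), ext2_eq_zero x (j := b - m / L₁₁) (by omega),
      zero_add]

lemma autocorr1D_eq_sum_fin (m : ℤ) :
    autocorr1D L₁₁ L₁₂ x m = ∑ n₁ : Fin L₁₁, ∑ n₂ : Fin L₁₂,
      x n₁ n₂ * starRingEnd ℂ (vec1D L₁₁ L₁₂ x ((n₁ : ℤ) + L₁₁ * (n₂ : ℤ) - m)) := by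
  rw [autocorr1D, Nat.mul_comm, ← Fin.sum_univ_eq_sum_range,
    ← Equiv.sum_comp finProdFinEquiv, Fintype.sum_prod_type, Finset.sum_comm]
  refine sum_congr rfl fun n₁ _ => sum_congr rfl fun n₂ _ => ?_
  have hstack : ((finProdFinEquiv (n₂, n₁) : ℕ) : ℤ) = (n₁ : ℤ) + L₁₁ * (n₂ : ℤ) := by
    simp only [finProdFinEquiv_apply_val]
    push_cast
    ring
  rw [hstack, vec1D_add_mul x _ (by positivity) (by exact_mod_cast n₁.2), ext2_natCast]

end Autocorrelation

theorem autocorr1D_eq_autocorr2D_general (L₁₁ L₁₂ : ℕ)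
    (x : Fin L₁₁ → Fin L₁₂ → ℂ) :
    ∀ m : ℤ, 0 ≤ m →
      autocorr1D L₁₁ L₁₂ x m
        = autocorr2D L₁₁ L₁₂ x (m % (L₁₁ : ℤ)) (m / (L₁₁ : ℤ))
          + autocorr2D L₁₁ L₁₂ x (m % (L₁₁ : ℤ) - (L₁₁ : ℤ)) (m / (L₁₁ : ℤ) + 1) := by
  intro m _
  rw [autocorr1D_eq_sum_fin, autocorr2D, autocorr2D, ← sum_add_distrib]
  refine sum_congr rfl fun n₁ _ => ?_
  rw [← sum_add_distrib]
  refine sum_congr rfl fun n₂ _ => ?_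
  rw [vec1D_add_mul_sub x _ _ (by positivity) (by exact_mod_cast n₁.2), map_add, mul_add]

/-- The 1D autocorrelation of the column-stacked vectorization of a 2D signal is
determined by its 2D autocorrelation:
`a₁D[m] = a₂D[m mod L₁₁, ⌊m/L₁₁⌋] + a₂D[(m mod L₁₁) − L₁₁, ⌊m/L₁₁⌋ + 1]` for `m ≥ 0`. -/
theorem autocorr1D_eq_autocorr2D (L₁₁ L₁₂ : ℕ) (hL₁₁ : 0 < L₁₁)
    (x : Fin L₁₁ → Fin L₁₂ → ℂ) :
    ∀ m : ℤ, 0 ≤ m →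
      autocorr1D L₁₁ L₁₂ x m
        = autocorr2D L₁₁ L₁₂ x (m % (L₁₁ : ℤ)) (m / (L₁₁ : ℤ))
          + autocorr2D L₁₁ L₁₂ x (m % (L₁₁ : ℤ) - (L₁₁ : ℤ)) (m / (L₁₁ : ℤ) + 1) :=
  autocorr1D_eq_autocorr2D_general L₁₁ L₁₂ x
end

section
/- Let x = e_1 = (1, 0, …, 0)^T ∈ ℂ^N. Then the only h ∈ ℂ^N such that H = x h* + h x* satisfies trace(A_m H) = 0 for all M = 4N−4 autocorrelation/cross-correlation sensing matrices A_m is h = i c e_1 for real c. -/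
open Matrix

/-- The first standard basis vector `e₁ ∈ ℂ^N`. -/
def e1 (N : ℕ) : Fin N → ℂ := fun i => if (i : ℕ) = 0 then 1 else 0

/-- The tangent-space matrix `H = e₁ h* + h e₁*`. -/
noncomputable def Hmat (N : ℕ) (h : Fin N → ℂ) : Matrix (Fin N) (Fin N) ℂ :=
  vecMulVec (e1 N) (star h) + vecMulVec h (star (e1 N))

/-- Zero-extension of `Hmat` to `ℤ × ℤ` indices. -/
noncomputable def Hext (N : ℕ) (h : Fin N → ℂ) (i j : ℤ) : ℂ :=
  if hc : 0 ≤ i ∧ i < (N : ℤ) ∧ 0 ≤ j ∧ j < (N : ℤ) then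
    Hmat N h ⟨i.toNat, by omega⟩ ⟨j.toNat, by omega⟩
  else 0

lemma Hext_out (N : ℕ) (h : Fin N → ℂ) (i j : ℤ)
    (hc : ¬ (0 ≤ i ∧ i < (N : ℤ) ∧ 0 ≤ j ∧ j < (N : ℤ))) : Hext N h i j = 0 := by
  unfold Hext; rw [dif_neg hc]

lemma Hext_off (N : ℕ) (h : Fin N → ℂ) (i j : ℤ) (hi : i ≠ 0) (hj : j ≠ 0) :
    Hext N h i j = 0 := by
  unfold Hext
  split
  · rename_i hc
    have hi' : i.toNat ≠ 0 := by omega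
    have hj' : j.toNat ≠ 0 := by omega
    simp [Hmat, Matrix.add_apply, vecMulVec_apply, e1, hi', hj']
  · rfl

lemma Hext_col0 (N : ℕ) (h : Fin N → ℂ) (i : ℤ) (hi0 : 0 ≤ i) (hiN : i < (N : ℤ))
    (hi : i ≠ 0) : Hext N h i 0 = h ⟨i.toNat, by omega⟩ := by
  unfold Hext
  rw [dif_pos (by omega)]
  have hi' : i.toNat ≠ 0 := by omega
  simp [Hmat, Matrix.add_apply, vecMulVec_apply, e1, hi']

lemma Hext_00 (N : ℕ) (h : Fin N → ℂ) (hN : 0 < N) :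
    Hext N h 0 0 = star (h ⟨0, hN⟩) + h ⟨0, hN⟩ := by
  unfold Hext
  rw [dif_pos (by omega)]
  simp [Hmat, Matrix.add_apply, vecMulVec_apply, e1]

/-- For `x = e₁ ∈ ℂ^N` (`N = L₁ + L₂`), the only `h` such that `H = x h* + h x*`
satisfies all the autocorrelation and cross-correlation linear (Toeplitz diagonal-sum)
constraints `trace (Aₘ H) = 0` is `h = i c e₁` for a real constant `c`. -/
theorem tangent_constraints_basis_vector (L₁ L₂ : ℕ) (hL₁ : 0 < L₁) (hL₂ : 0 < L₂)
    (h : Fin (L₁ + L₂) → ℂ)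
    (hA1 : ∀ m : ℤ, ∑ n : Fin L₁,
      (if (n : ℤ) - m < (L₁ : ℤ) then Hext (L₁ + L₂) h (n : ℤ) ((n : ℤ) - m) else 0) = 0)
    (hA2 : ∀ m : ℤ, ∑ n : Fin L₂,
      (if 0 ≤ (n : ℤ) - m then
        Hext (L₁ + L₂) h ((L₁ : ℤ) + (n : ℤ)) ((L₁ : ℤ) + ((n : ℤ) - m)) else 0) = 0)
    (hA12 : ∀ m : ℤ, ∑ n : Fin L₁,
      (if 0 ≤ (n : ℤ) - m then
        Hext (L₁ + L₂) h (n : ℤ) ((L₁ : ℤ) + ((n : ℤ) - m)) else 0) = 0)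
    (hA21 : ∀ m : ℤ, ∑ n : Fin L₂,
      (if (n : ℤ) - m < (L₁ : ℤ) then
        Hext (L₁ + L₂) h ((L₁ : ℤ) + (n : ℤ)) ((n : ℤ) - m) else 0) = 0) :
    ∃ c : ℝ, h = fun i => Complex.I * (c : ℂ) * e1 (L₁ + L₂) i := by
  have hN : 0 < L₁ + L₂ := by omega
  -- h vanishes off the first coordinate
  have hzero : ∀ k : Fin (L₁ + L₂), (k : ℕ) ≠ 0 → h k = 0 := by
    intro k hk
    by_cases hkL : (k : ℕ) < L₁
    · -- use hA1 at m = k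
      have H1 := hA1 (k : ℕ)
      rw [Finset.sum_eq_single (⟨(k : ℕ), hkL⟩ : Fin L₁)] at H1
      · simp only [Fin.val_mk, sub_self] at H1
        rw [if_pos (by exact_mod_cast hL₁)] at H1
        rw [Hext_col0 (L₁ + L₂) h (k : ℕ) (by omega) (by exact_mod_cast k.isLt)
          (by exact_mod_cast hk)] at H1
        simpa using H1
      · intro b _ hb
        split
        · rcases lt_trichotomy ((b : ℤ)) ((k : ℕ) : ℤ) with hlt | heq | hgt
          · exact Hext_out _ _ _ _ (by omega)
          · exact absurd (Fin.ext (by exact_mod_cast heq)) hb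
          · exact Hext_off _ _ _ _ (by omega) (by omega)
        · rfl
      · intro hmem; exact absurd (Finset.mem_univ _) hmem
    · -- use hA21 at m = k - L₁
      have hkL' : (k : ℕ) - L₁ < L₂ := by omega
      have H1 := hA21 ((k : ℕ) - L₁ : ℕ)
      rw [Finset.sum_eq_single (⟨(k : ℕ) - L₁, hkL'⟩ : Fin L₂)] at H1
      · simp only [Fin.val_mk] at H1
        have hsub : (((k : ℕ) - L₁ : ℕ) : ℤ) - (((k : ℕ) - L₁ : ℕ) : ℤ) = 0 := by ring
        rw [hsub] at H1
        rw [if_pos (by exact_mod_cast hL₁)] at H1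
        have hidx : (L₁ : ℤ) + (((k : ℕ) - L₁ : ℕ) : ℤ) = ((k : ℕ) : ℤ) := by
          push_cast [Nat.cast_sub (by omega : L₁ ≤ (k : ℕ))]; ring
        rw [hidx] at H1
        rw [Hext_col0 (L₁ + L₂) h (k : ℕ) (by omega) (by exact_mod_cast k.isLt)
          (by exact_mod_cast hk)] at H1
        simpa using H1
      · intro b _ hb
        split
        · rcases lt_trichotomy ((b : ℤ)) ((((k : ℕ) - L₁ : ℕ)) : ℤ) with hlt | heq | hgt
          · exact Hext_out _ _ _ _ (by omega)
          · exact absurd (Fin.ext (by exact_mod_cast heq)) hb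
          · exact Hext_off _ _ _ _ (by omega) (by omega)
        · rfl
      · intro hmem; exact absurd (Finset.mem_univ _) hmem
  -- real part of h 0 vanishes
  have hre : star (h ⟨0, hN⟩) + h ⟨0, hN⟩ = 0 := by
    have H1 := hA1 0
    rw [Finset.sum_eq_single (⟨0, hL₁⟩ : Fin L₁)] at H1
    · simp only [Fin.val_mk, Nat.cast_zero, sub_zero] at H1
      rw [if_pos (by exact_mod_cast hL₁)] at H1
      rw [Hext_00 (L₁ + L₂) h hN] at H1
      exact H1
    · intro b _ hb
      split
      · have hb' : ((b : ℤ)) ≠ 0 := by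
          intro hc
          exact hb (Fin.ext (by exact_mod_cast hc))
        exact Hext_off _ _ _ _ (by omega) (by omega)
      · rfl
    · intro hmem; exact absurd (Finset.mem_univ _) hmem
  refine ⟨(h ⟨0, hN⟩).im, ?_⟩
  funext i
  by_cases hi : (i : ℕ) = 0
  · have hieq : i = ⟨0, hN⟩ := Fin.ext hi
    subst hieq
    simp only [e1, hi, if_pos, mul_one]
    have h2 : (h ⟨0, hN⟩).re = 0 := by
      have := congrArg Complex.re hre
      simp [Complex.add_re] at this
      linarith
    apply Complex.ext
    · simp [h2]
    · simp
  · rw [hzero i hi]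
    simp [e1, hi]
end
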